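/- For every odd k ≥ 1 with k < 2k (i.e., k ≥ 1), the domination number of the generalized Petersen graph P(4k,k) equals 2k. -/

import Mathlib

open SimpleGraph

/-- The generalized Petersen graph P(n,k): outer vertices `Sum.inl i`,
inner vertices `Sum.inr i`, indices in `ZMod n`. -/
def petersen (n k : ℕ) : SimpleGraph (ZMod n ⊕ ZMod n) :=
  SimpleGraph.fromRel (fun a b =>
    match a, b with
    | Sum.inl i, Sum.inl j => j = i + 1
    | Sum.inl i, Sum.inr j => j = i
    | Sum.inr i, Sum.inr j => j = i + (k : ZMod n)
    | _, _ => False)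

/-- S is a dominating set: N[S] = V. -/
def IsDominating {V : Type*} (G : SimpleGraph V) (S : Set V) : Prop :=
  ∀ v, v ∈ S ∨ ∃ u ∈ S, G.Adj u v

/-- The domination number: minimum cardinality of a (finite) dominating set. -/
noncomputable def gamma {V : Type*} (G : SimpleGraph V) : ℕ :=
  sInf {m | ∃ S : Finset V, IsDominating G ↑S ∧ S.card = m}


/-!
Reduction mod 4 is a covering map from P(4m, k) onto P(4, k mod 4), and dominating sets pull back
along coverings. For odd k, P(4, 1) = P(4, 3) is the 3-cube, dominated by two antipodal vertices;
their preimage is a dominating set of size 2m. Conversely P(n, k) is cubic, so a vertex dominates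
at most 4 of the 2n vertices.
-/

open Finset Sum

theorem IsDominating.preimage {V W : Type*} {G : SimpleGraph V} {H : SimpleGraph W} {f : V → W}
    (hf : ∀ v w, H.Adj w (f v) → ∃ u, f u = w ∧ G.Adj u v) {D : Set W}
    (hD : IsDominating H D) : IsDominating G (f ⁻¹' D) := by
  intro v
  rcases hD (f v) with hv | ⟨w, hw, hwv⟩
  · exact .inl hv
  · obtain ⟨u, rfl, huv⟩ := hf v w hwv
    exact .inr ⟨u, hw, huv⟩

theorem IsDominating.card_le_card_mul_maxDegree_add_one {V : Type*} [Fintype V] [DecidableEq V]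
    {G : SimpleGraph V} [DecidableRel G.Adj] {S : Finset V} (hS : IsDominating G S) :
    Fintype.card V ≤ #S * (G.maxDegree + 1) := by
  have hcover : (univ : Finset V) ⊆ S.biUnion fun u => insert u (G.neighborFinset u) := by
    intro v _
    simp only [mem_biUnion, mem_insert, mem_neighborFinset]
    rcases hS v with hv | ⟨u, hu, huv⟩
    · exact ⟨v, hv, .inl rfl⟩
    · exact ⟨u, hu, .inr huv⟩
  calc Fintype.card V = #univ := card_univ.symm
    _ ≤ #(S.biUnion fun u => insert u (G.neighborFinset u)) := card_le_card hcover
    _ ≤ ∑ u ∈ S, #(insert u (G.neighborFinset u)) := card_biUnion_le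
    _ ≤ ∑ _u ∈ S, (G.maxDegree + 1) := sum_le_sum fun u _ =>
      (card_insert_le _ _).trans (Nat.succ_le_succ (G.degree_le_maxDegree u))
    _ = #S * (G.maxDegree + 1) := by rw [sum_const, smul_eq_mul]

theorem gamma_le_card {V : Type*} {G : SimpleGraph V} {S : Finset V} (hS : IsDominating G S) :
    gamma G ≤ #S :=
  Nat.sInf_le ⟨S, hS, rfl⟩

theorem exists_isDominating_card_eq_gamma {V : Type*} [Fintype V] (G : SimpleGraph V) :
    ∃ S : Finset V, IsDominating G S ∧ #S = gamma G :=
  Nat.sInf_mem (s := {m | ∃ S : Finset V, IsDominating G S ∧ #S = m})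
    ⟨_, univ, fun _ => .inl (by simp), rfl⟩

theorem AddMonoidHom.card_mul_card_fiber {G M : Type*} [AddGroup G] [Fintype G] [AddMonoid M]
    [Fintype M] [DecidableEq M] (f : G →+ M) (hf : Function.Surjective f) (x : M) :
    Fintype.card M * #{g | f g = x} = Fintype.card G := by
  calc Fintype.card M * #{g | f g = x} = ∑ y : M, #{g | f g = y} := by
        rw [sum_congr rfl fun y _ => card_fiber_eq_of_mem_range f (hf y) (hf x), sum_const,
          card_univ, smul_eq_mul]
    _ = Fintype.card G := (card_eq_sum_card_fiberwise fun _ _ => mem_univ _).symm.trans card_univ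

theorem ZMod.card_filter_castHom_eq (d m : ℕ) [NeZero d] [NeZero m] (c : ZMod d) :
    #{i : ZMod (d * m) | ZMod.castHom (dvd_mul_right d m) (ZMod d) i = c} = m := by
  have h := (ZMod.castHom (dvd_mul_right d m) (ZMod d)).toAddMonoidHom.card_mul_card_fiber
    (ZMod.castHom_surjective (dvd_mul_right d m)) c
  rw [ZMod.card, ZMod.card] at h
  exact Nat.eq_of_mul_eq_mul_left (Nat.pos_of_neZero d) h

section Petersen
variable {n k : ℕ}

@[simp] theorem petersen_adj_inl_inl {i j : ZMod n} :
    (petersen n k).Adj (inl i) (inl j) ↔ i ≠ j ∧ (j = i + 1 ∨ i = j + 1) := by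
  simp [petersen]

@[simp] theorem petersen_adj_inl_inr {i j : ZMod n} :
    (petersen n k).Adj (inl i) (inr j) ↔ j = i := by
  simp [petersen]

@[simp] theorem petersen_adj_inr_inl {i j : ZMod n} :
    (petersen n k).Adj (inr i) (inl j) ↔ i = j := by
  simp [petersen]

@[simp] theorem petersen_adj_inr_inr {i j : ZMod n} :
    (petersen n k).Adj (inr i) (inr j) ↔ i ≠ j ∧ (j = i + k ∨ i = j + k) := by
  simp [petersen]

instance : DecidableRel (petersen n k).Adj
  | inl _, inl _ => decidable_of_iff _ petersen_adj_inl_inl.symm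
  | inl _, inr _ => decidable_of_iff _ petersen_adj_inl_inr.symm
  | inr _, inl _ => decidable_of_iff _ petersen_adj_inr_inl.symm
  | inr _, inr _ => decidable_of_iff _ petersen_adj_inr_inr.symm

theorem maxDegree_petersen_le [NeZero n] : (petersen n k).maxDegree ≤ 3 := by
  refine maxDegree_le_of_forall_degree_le _ _ fun v => ?_
  rw [← card_neighborFinset_eq_degree]
  rcases v with i | i
  · refine (card_le_card fun w hw => ?_).trans
      (card_le_three (a := inl (i + 1)) (b := inl (i - 1)) (c := inr i))
    rw [mem_neighborFinset] at hw
    rcases w with j | j <;> simp [eq_sub_iff_add_eq] at hw ⊢ <;> tauto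
  · refine (card_le_card fun w hw => ?_).trans
      (card_le_three (a := inr (i + k)) (b := inr (i - k)) (c := inl i))
    rw [mem_neighborFinset] at hw
    rcases w with j | j <;> simp [eq_sub_iff_add_eq] at hw ⊢ <;> tauto

theorem petersen_adj_lift {n' : ℕ} (φ : ZMod n →+* ZMod n') {v : ZMod n ⊕ ZMod n}
    {w : ZMod n' ⊕ ZMod n'} (h : (petersen n' k).Adj w (Sum.map φ φ v)) :
    ∃ u, Sum.map φ φ u = w ∧ (petersen n k).Adj u v := by
  rcases v with i | i <;> rcases w with a | a <;>
    simp only [Sum.map_inl, Sum.map_inr, petersen_adj_inl_inl, petersen_adj_inl_inr,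
      petersen_adj_inr_inl, petersen_adj_inr_inr] at h
  case inl.inl =>
    obtain ⟨hai, h | rfl⟩ := h
    · refine ⟨inl (i - 1), by simp [h],
        petersen_adj_inl_inl.2 ⟨ne_of_apply_ne φ ?_, .inl (sub_add_cancel i 1).symm⟩⟩
      simpa [h] using hai
    · exact ⟨inl (i + 1), by simp,
        petersen_adj_inl_inl.2 ⟨ne_of_apply_ne φ (by simpa using hai), .inr rfl⟩⟩
  case inl.inr => exact ⟨inr i, by simp [h], by simp⟩
  case inr.inl => exact ⟨inl i, by simp [h], by simp⟩
  case inr.inr =>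
    obtain ⟨hai, h | rfl⟩ := h
    · refine ⟨inr (i - k), by simp [h],
        petersen_adj_inr_inr.2 ⟨ne_of_apply_ne φ ?_, .inl (sub_add_cancel i k).symm⟩⟩
      simpa [h] using hai
    · exact ⟨inr (i + k), by simp,
        petersen_adj_inr_inr.2 ⟨ne_of_apply_ne φ (by simpa using hai), .inr rfl⟩⟩

theorem isDominating_petersen_four (hk : k % 2 = 1) :
    IsDominating (petersen 4 k) ↑({inl 0, inr 2} : Finset (ZMod 4 ⊕ ZMod 4)) := by
  have hmod : petersen 4 k = petersen 4 (k % 4) := by rw [petersen, petersen, ZMod.natCast_mod]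
  obtain h | h : k % 4 = 1 ∨ k % 4 = 3 := Nat.odd_mod_four_iff.1 hk
  all_goals rw [hmod, h]; unfold IsDominating; decide

theorem le_two_mul_gamma_petersen [NeZero n] : n ≤ 2 * gamma (petersen n k) := by
  obtain ⟨S, hS, hcard⟩ := exists_isDominating_card_eq_gamma (petersen n k)
  have hbound : 2 * n ≤ gamma (petersen n k) * 4 :=
    calc 2 * n = Fintype.card (ZMod n ⊕ ZMod n) := by rw [Fintype.card_sum, ZMod.card, two_mul]
      _ ≤ #S * ((petersen n k).maxDegree + 1) := hS.card_le_card_mul_maxDegree_add_one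
      _ ≤ gamma (petersen n k) * 4 := by
          rw [hcard]; gcongr; exact Nat.succ_le_succ maxDegree_petersen_le
  omega

theorem gamma_petersen_four_mul_le {m : ℕ} [NeZero m] (hk : k % 2 = 1) :
    gamma (petersen (4 * m) k) ≤ 2 * m := by
  set r := ZMod.castHom (dvd_mul_right 4 m) (ZMod 4)
  have hD := (isDominating_petersen_four hk).preimage (f := Sum.map r r)
    fun _ _ => petersen_adj_lift r
  calc gamma (petersen (4 * m) k)
      ≤ #{v | Sum.map r r v ∈ ({inl 0, inr 2} : Finset (ZMod 4 ⊕ ZMod 4))} :=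
        gamma_le_card (by rw [coe_filter_univ]; exact hD)
    _ = #{i | r i = 0} + #{i | r i = 2} := by
        simp only [card_filter, Fintype.sum_sum_type]
        simp
    _ = 2 * m := by rw [ZMod.card_filter_castHom_eq, ZMod.card_filter_castHom_eq, two_mul]

end Petersen

theorem gamma_P4k_odd_general (k : ℕ) (hkodd : k % 2 = 1) :
    gamma (petersen (4 * k) k) = 2 * k := by
  have : NeZero k := ⟨by omega⟩
  have hlower := le_two_mul_gamma_petersen (n := 4 * k) (k := k)
  exact le_antisymm (gamma_petersen_four_mul_le hkodd) (by omega)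

theorem gamma_P4k_odd (k : ℕ) (hk : 1 ≤ k) (hkodd : k % 2 = 1) :
    gamma (petersen (4 * k) k) = 2 * k :=
  gamma_P4k_odd_general k hkodd
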